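/- Let w be the Buchstab function: w(u) = 1/u for 1 ≤ u ≤ 2, and (u·w(u))' = w(u−1) for u > 2. Then w(u) ≤ 1 for all u ≥ 1. -/

import Mathlib

/-!
On `[2, u]` the derivative of `v ↦ v·w(v)` is `w(v - 1)`; if `w ≤ 1` on `[1, u - 1]` the mean value
inequality gives `u·w(u) ≤ 2·w(2) + (u - 2) = u - 1`, hence `w(u) < 1`. Since `w ≤ 1` on `[1, 2]`,
induction over the intervals `[1, 2 + n]` covers every `u ≥ 1`.
-/

open Set

section Buchstab

variable {w : ℝ → ℝ}

theorem mul_apply_sub_two_mul_apply_two_le (hcont : ContinuousOn w (Ici 1))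
    (hode : ∀ u : ℝ, 2 < u → HasDerivAt (fun v => v * w v) (w (u - 1)) u)
    {u : ℝ} (hu : 2 ≤ u) (hprev : ∀ x ∈ Icc 1 (u - 1), w x ≤ 1) :
    u * w u - 2 * w 2 ≤ u - 2 := by
  have hcont' : ContinuousOn (fun v => v * w v) (Icc 2 u) :=
    continuousOn_id.mul (hcont.mono fun x hx => by simp only [mem_Ici]; linarith [hx.1])
  have hderiv : ∀ x ∈ interior (Icc 2 u), HasDerivAt (fun v => v * w v) (w (x - 1)) x := by
    rw [interior_Icc]
    exact fun x hx => hode x hx.1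
  have hle := (convex_Icc 2 u).image_sub_le_mul_sub_of_deriv_le hcont'
    (fun x hx => (hderiv x hx).differentiableAt.differentiableWithinAt)
    (C := 1) (fun x hx => by
      rw [(hderiv x hx).deriv]
      rw [interior_Icc] at hx
      exact hprev (x - 1) ⟨by linarith [hx.1], by linarith [hx.2]⟩)
    2 (left_mem_Icc.2 hu) u (right_mem_Icc.2 hu) hu
  simpa using hle

theorem apply_le_one_of_le_one_on_Icc (hcont : ContinuousOn w (Ici 1))
    (hode : ∀ u : ℝ, 2 < u → HasDerivAt (fun v => v * w v) (w (u - 1)) u)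
    (hw2 : w 2 = 1 / 2) {u : ℝ} (hu : 2 ≤ u) (hprev : ∀ x ∈ Icc 1 (u - 1), w x ≤ 1) :
    w u ≤ 1 := by
  have h := mul_apply_sub_two_mul_apply_two_le hcont hode hu hprev
  rw [hw2] at h
  have hu0 : 0 < u := by linarith
  nlinarith

end Buchstab

/-- The Buchstab function `w` (continuous on `[1,∞)`, `w(u) = 1/u` on `[1,2]`,
`(u·w(u))' = w(u-1)` for `u > 2`) satisfies `w(u) ≤ 1` for all `u ≥ 1`. -/
theorem buchstab_function_le_one (w : ℝ → ℝ) (hcont : ContinuousOn w (Set.Ici 1))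
    (h12 : ∀ u : ℝ, 1 ≤ u → u ≤ 2 → w u = 1 / u)
    (hode : ∀ u : ℝ, 2 < u → HasDerivAt (fun v => v * w v) (w (u - 1)) u) :
    ∀ u : ℝ, 1 ≤ u → w u ≤ 1 := by
  have hbase : ∀ u ∈ Icc (1 : ℝ) 2, w u ≤ 1 := fun u hu => by
    rw [h12 u hu.1 hu.2, div_le_one (by linarith [hu.1])]
    exact hu.1
  have hw2 : w 2 = 1 / 2 := h12 2 one_le_two le_rfl
  have hinterval : ∀ n : ℕ, ∀ u ∈ Icc (1 : ℝ) (2 + n), w u ≤ 1 := by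
    intro n
    induction n with
    | zero => simpa using hbase
    | succ n ih =>
      intro u hu
      rcases le_total u 2 with hu2 | hu2
      · exact hbase u ⟨hu.1, hu2⟩
      · refine apply_le_one_of_le_one_on_Icc hcont hode hw2 hu2 fun x hx => ih x ⟨hx.1, ?_⟩
        push_cast at hu
        linarith [hx.2, hu.2]
  intro u hu
  exact hinterval ⌈u⌉₊ u ⟨hu, by linarith [Nat.le_ceil u]⟩
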